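/- arXiv:cond-mat/0002244 — 5 statements merged into one kernel-verified Lean document; each statement's English description precedes it below -/
import Mathlib

section
/- There exists a constant C > 0 such that for every integer n ≠ 0 and every real t, |G₁(n,t)| ≤ C·(|t| + |t|³)/n². -/
open Set Filter

/-- Lattice Green function `G₁(n,t) = (2/π) ∫_{-π}^{π} cos(2σn) sin(2t sin σ) sin σ dσ`. -/
noncomputable def G1fun (n : ℤ) (t : ℝ) : ℝ :=
  (2 / Real.pi) * ∫ σ in (-Real.pi)..Real.pi,
    Real.cos (2 * σ * (n : ℝ)) * Real.sin (2 * t * Real.sin σ) * Real.sin σ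

/-- Lattice Green function `G(n,t) = (2/π) ∫_{-π}^{π} cos(2σn) sin(2t sin σ)/sin σ dσ`,
with the integrand extended by its limiting value `2t cos(2σn)` where `sin σ = 0`. -/
noncomputable def Gfun (n : ℤ) (t : ℝ) : ℝ :=
  (2 / Real.pi) * ∫ σ in (-Real.pi)..Real.pi,
    if Real.sin σ = 0 then 2 * t * Real.cos (2 * σ * (n : ℝ))
    else Real.cos (2 * σ * (n : ℝ)) * Real.sin (2 * t * Real.sin σ) / Real.sin σ

/-- Discrete Laplacian `Δf_n = f_{n+1} + f_{n-1} - 2 f_n`. -/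
noncomputable def lap (f : ℤ → ℝ) (n : ℤ) : ℝ := f (n + 1) + f (n - 1) - 2 * f n

/-- The tail sum `Σ_{m ≤ n-1} f_m`. -/
noncomputable def tailSum (f : ℤ → ℝ) (n : ℤ) : ℝ := ∑' m : {m : ℤ // m ≤ n - 1}, f m.1

/-- Convergence of the tail series `Σ_{m ≤ n-1} f_m`. -/
def TailSummable (f : ℤ → ℝ) (n : ℤ) : Prop :=
  Summable (fun m : {m : ℤ // m ≤ n - 1} => f m.1)

/-- The family `α` (with time derivatives taken within `s`) has finite energy norm on `[0,T)`:
`sup_{0≤t<T} [ Σ_n (Σ_{m≤n-1} α̇_m(t))² + Σ_n α_n(t)² ] < ∞`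
(in particular all the series involved converge). -/
def FiniteEnergyOn (α : ℤ → ℝ → ℝ) (s : Set ℝ) (T : ℝ) : Prop :=
  (∀ n : ℤ, ∀ t ∈ Ico (0 : ℝ) T, TailSummable (fun m => derivWithin (α m) s t) n) ∧
  ∃ M : ℝ, ∀ t ∈ Ico (0 : ℝ) T,
    Summable (fun n : ℤ => (tailSum (fun m => derivWithin (α m) s t) n) ^ 2) ∧
    Summable (fun n : ℤ => (α n t) ^ 2) ∧
    (∑' n : ℤ, (tailSum (fun m => derivWithin (α m) s t) n) ^ 2)
      + (∑' n : ℤ, (α n t) ^ 2) ≤ M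

/-- `α` solves the FPU lattice equation `α̈_n = Δα_n + χ Δ(α_n^p)` on `s`. -/
def SolvesFPU (p : ℕ) (χ : ℝ) (α : ℤ → ℝ → ℝ) (s : Set ℝ) : Prop :=
  ∀ n : ℤ, ∀ t ∈ s,
    derivWithin (derivWithin (α n) s) s t
      = lap (fun m => α m t) n + χ * lap (fun m => (α m t) ^ p) n

/-- `α` solves the sine-Gordon lattice equation `α̈_n = Δα_n + χ Δ(sin α_n)` on `s`. -/
def SolvesSG (χ : ℝ) (α : ℤ → ℝ → ℝ) (s : Set ℝ) : Prop :=
  ∀ n : ℤ, ∀ t ∈ s,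
    derivWithin (derivWithin (α n) s) s t
      = lap (fun m => α m t) n + χ * lap (fun m => Real.sin (α m t)) n

/-- `u` solves the on-site lattice equation `ü_n = Δu_n - χ u_n^p` on `s`. -/
def SolvesOnSite (p : ℕ) (χ : ℝ) (u : ℤ → ℝ → ℝ) (s : Set ℝ) : Prop :=
  ∀ n : ℤ, ∀ t ∈ s,
    derivWithin (derivWithin (u n) s) s t = lap (fun m => u m t) n - χ * (u n t) ^ p

/-- On-site energy norm finiteness: `sup_{0≤t<T} Σ_n [u̇_n(t)² + u_n(t)²] < ∞`. -/
def OnSiteFiniteEnergy (u : ℤ → ℝ → ℝ) (s : Set ℝ) (T : ℝ) : Prop :=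
  ∃ M : ℝ, ∀ t ∈ Ico (0 : ℝ) T,
    Summable (fun n : ℤ => (derivWithin (u n) s t) ^ 2 + (u n t) ^ 2) ∧
    (∑' n : ℤ, ((derivWithin (u n) s t) ^ 2 + (u n t) ^ 2)) ≤ M

/-!
Write the integrand as `u(σ) cos(2nσ)` with `u(σ) = sin(2t sin σ) sin σ`. Both `u` and `u'` vanish
at `±π`, so integrating by parts twice moves two derivatives onto `u` at the cost of a factor
`(2n)⁻²` and without boundary terms. Finally `|u''| ≤ 4t² + 8|t|`, the extra factor `|t|` coming
from `|sin(2t sin σ)| ≤ 2|t|`, and `4t² + 8|t| ≤ 10(|t| + |t|³)`.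
-/

open Real MeasureTheory intervalIntegral

section IntegrationByParts

variable {u u' u'' : ℝ → ℝ} {a b k : ℝ}

theorem integral_mul_cos_eq_of_hasDerivAt (hk : k ≠ 0)
    (hu : ∀ x ∈ uIcc a b, HasDerivAt u (u' x) x) (hu' : ∀ x ∈ uIcc a b, HasDerivAt u' (u'' x) x)
    (hu'' : IntervalIntegrable u'' volume a b)
    (ha : u a = 0) (hb : u b = 0) (ha' : u' a = 0) (hb' : u' b = 0) :
    ∫ x in a..b, u x * cos (k * x) = -(∫ x in a..b, u'' x * cos (k * x)) / k ^ 2 := by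
  have hlin (x : ℝ) : HasDerivAt (fun x => k * x) k x := by
    simpa using (hasDerivAt_id x).const_mul k
  have hv (x : ℝ) : HasDerivAt (fun x => sin (k * x) / k) (cos (k * x)) x := by
    refine ((hlin x).sin.div_const k).congr_deriv ?_
    field_simp
  have hw (x : ℝ) : HasDerivAt (fun x => -cos (k * x) / k ^ 2) (sin (k * x) / k) x := by
    refine ((hlin x).cos.neg.div_const (k ^ 2)).congr_deriv ?_
    field_simp
  have hu'_int : IntervalIntegrable u' volume a b :=
    (HasDerivAt.continuousOn hu').intervalIntegrable
  have first := integral_mul_deriv_eq_deriv_mul hu (fun x _ => hv x) hu'_int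
    ((by fun_prop : Continuous fun x => cos (k * x)).intervalIntegrable _ _)
  have second := integral_mul_deriv_eq_deriv_mul hu' (fun x _ => hw x) hu''
    ((by fun_prop : Continuous fun x => sin (k * x) / k).intervalIntegrable _ _)
  simp only [ha, hb, ha', hb', zero_mul, sub_zero, zero_sub] at first second
  rw [first, second, neg_neg]
  simp only [mul_div_assoc', mul_neg, intervalIntegral.integral_neg, intervalIntegral.integral_div]

theorem abs_integral_mul_cos_le_of_hasDerivAt {M : ℝ} (hk : k ≠ 0)
    (hu : ∀ x ∈ uIcc a b, HasDerivAt u (u' x) x) (hu' : ∀ x ∈ uIcc a b, HasDerivAt u' (u'' x) x)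
    (hu'' : IntervalIntegrable u'' volume a b)
    (ha : u a = 0) (hb : u b = 0) (ha' : u' a = 0) (hb' : u' b = 0)
    (hM : ∀ x ∈ uIcc a b, |u'' x| ≤ M) :
    |∫ x in a..b, u x * cos (k * x)| ≤ M * |b - a| / k ^ 2 := by
  rw [integral_mul_cos_eq_of_hasDerivAt hk hu hu' hu'' ha hb ha' hb', abs_div, abs_neg,
    abs_of_nonneg (sq_nonneg k)]
  refine div_le_div_of_nonneg_right ?_ (sq_nonneg k)
  rw [← Real.norm_eq_abs]
  refine norm_integral_le_of_norm_le_const fun x hx => ?_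
  rw [Real.norm_eq_abs, abs_mul]
  exact (mul_le_of_le_one_right (abs_nonneg _) (abs_cos_le_one _)).trans
    (hM x (uIoc_subset_uIcc hx))

end IntegrationByParts

section Profile

variable (t x : ℝ)

theorem hasDerivAt_sin_mul_sin_mul_sin :
    HasDerivAt (fun x => sin (2 * t * sin x) * sin x)
      (2 * t * cos (2 * t * sin x) * cos x * sin x + sin (2 * t * sin x) * cos x) x := by
  refine ((((hasDerivAt_sin x).const_mul (2 * t)).sin).mul (hasDerivAt_sin x)).congr_deriv ?_
  ring

theorem hasDerivAt_deriv_sin_mul_sin_mul_sin :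
    HasDerivAt (fun x => 2 * t * cos (2 * t * sin x) * cos x * sin x + sin (2 * t * sin x) * cos x)
      (-4 * t ^ 2 * sin (2 * t * sin x) * cos x ^ 2 * sin x
        - 2 * t * cos (2 * t * sin x) * sin x ^ 2 + 4 * t * cos (2 * t * sin x) * cos x ^ 2
        - sin (2 * t * sin x) * sin x) x := by
  have hinner := (hasDerivAt_sin x).const_mul (2 * t)
  refine (((((hinner.cos).const_mul (2 * t)).mul (hasDerivAt_cos x)).mul (hasDerivAt_sin x)).add
    ((hinner.sin).mul (hasDerivAt_cos x))).congr_deriv ?_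
  simp only [Pi.mul_apply]
  ring

theorem abs_deriv_deriv_sin_mul_sin_mul_sin_le :
    |-4 * t ^ 2 * sin (2 * t * sin x) * cos x ^ 2 * sin x
        - 2 * t * cos (2 * t * sin x) * sin x ^ 2 + 4 * t * cos (2 * t * sin x) * cos x ^ 2
        - sin (2 * t * sin x) * sin x| ≤ 4 * t ^ 2 + 8 * |t| := by
  set S := sin (2 * t * sin x)
  set C := cos (2 * t * sin x)
  have hS : |S| ≤ 1 := abs_sin_le_one _
  have hC : |C| ≤ 1 := abs_cos_le_one _
  have hs : |sin x| ≤ 1 := abs_sin_le_one x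
  have hc : |cos x| ≤ 1 := abs_cos_le_one x
  have hSt : |S| ≤ 2 * |t| :=
    calc |S| ≤ |2 * t * sin x| := abs_sin_le_abs
      _ = 2 * |t| * |sin x| := by rw [abs_mul, abs_mul, abs_two]
      _ ≤ 2 * |t| * 1 := by gcongr
      _ = 2 * |t| := mul_one _
  have h1 : |t ^ 2 * S * cos x ^ 2 * sin x| ≤ t ^ 2 := by
    simp only [abs_mul, abs_pow]
    calc _ ≤ |t| ^ 2 * 1 * 1 ^ 2 * 1 := by gcongr
      _ = t ^ 2 := by rw [sq_abs]; ring
  have h2 : |t * C * sin x ^ 2| ≤ |t| := by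
    simp only [abs_mul, abs_pow]
    calc _ ≤ |t| * 1 * 1 ^ 2 := by gcongr
      _ = |t| := by ring
  have h3 : |t * C * cos x ^ 2| ≤ |t| := by
    simp only [abs_mul, abs_pow]
    calc _ ≤ |t| * 1 * 1 ^ 2 := by gcongr
      _ = |t| := by ring
  have h4 : |S * sin x| ≤ 2 * |t| := by
    rw [abs_mul]
    calc _ ≤ 2 * |t| * 1 := by gcongr
      _ = 2 * |t| := mul_one _
  rw [abs_le] at h1 h2 h3 h4 ⊢
  constructor <;> linarith [abs_nonneg t]

end Profile

/-- There is `C > 0` with `|G₁(n,t)| ≤ C (|t|+|t|³)/n²` for all `n ≠ 0`, `t ∈ ℝ`. -/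
theorem green_G1_decay : ∃ C : ℝ, 0 < C ∧ ∀ n : ℤ, n ≠ 0 → ∀ t : ℝ,
    |G1fun n t| ≤ C * (|t| + |t| ^ 3) / (n : ℝ) ^ 2 := by
  refine ⟨10, by norm_num, fun n hn t => ?_⟩
  have hk : (2 * n : ℝ) ≠ 0 := mul_ne_zero two_ne_zero (Int.cast_ne_zero.mpr hn)
  have hG : G1fun n t = 2 / π *
      ∫ x in -π..π, sin (2 * t * sin x) * sin x * cos (2 * n * x) := by
    unfold G1fun
    congr 1
    exact integral_congr fun x _ => by ring_nf
  have hI := abs_integral_mul_cos_le_of_hasDerivAt (a := -π) (b := π) hk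
    (fun x _ => hasDerivAt_sin_mul_sin_mul_sin t x)
    (fun x _ => hasDerivAt_deriv_sin_mul_sin_mul_sin t x)
    (Continuous.intervalIntegrable (by fun_prop) _ _) (by simp) (by simp) (by simp) (by simp)
    (fun x _ => abs_deriv_deriv_sin_mul_sin_mul_sin_le t x)
  have hpoly : 4 * t ^ 2 + 8 * |t| ≤ 10 * (|t| + |t| ^ 3) := by
    rw [← sq_abs t]
    nlinarith [mul_nonneg (abs_nonneg t) (sq_nonneg (|t| - 1))]
  calc |G1fun n t| ≤ 2 / π * ((4 * t ^ 2 + 8 * |t|) * |π - -π| / (2 * n) ^ 2) := by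
        rw [hG, abs_mul, abs_of_pos (by positivity)]
        gcongr
    _ = (4 * t ^ 2 + 8 * |t|) / (n : ℝ) ^ 2 := by
        rw [sub_neg_eq_add, abs_of_pos (by positivity : 0 < π + π)]
        field_simp
        ring
    _ ≤ 10 * (|t| + |t| ^ 3) / (n : ℝ) ^ 2 := by gcongr
end

section
/- There exists a constant C > 0 such that for every integer n ≠ 0 and every real t, the time derivative of the lattice Green function satisfies |∂ₜG(n,t)| ≤ C·t²/n². -/
open Set Filter

/-!
Differentiating under the integral sign gives
`∂ₜG(n,t) = (4/π) ∫_{-π}^{π} cos(2nσ) cos(2t sin σ) dσ`. Integrating by parts twice against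
`cos(2nσ)` gains a factor `1/(2n)²` and leaves no boundary terms, because `sin(2nπ) = 0` and the
σ-derivative of `cos(2t sin σ)` vanishes at `±π`. The second σ-derivative of `cos(a sin σ)` is
bounded by `a²`, since `|sin y| ≤ |y|`.
-/

open Real MeasureTheory

theorem abs_integral_cos_int_mul_le_of_hasDerivAt {k : ℤ} (hk : k ≠ 0) {v v' v'' : ℝ → ℝ} {M : ℝ}
    (hv : ∀ x, HasDerivAt v (v' x) x) (hv' : ∀ x, HasDerivAt v' (v'' x) x)
    (hv'' : IntervalIntegrable v'' volume (-π) π) (hper : v' (-π) = v' π)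
    (hM : ∀ x, |v'' x| ≤ M) :
    |∫ x in -π..π, cos (k * x) * v x| ≤ 2 * π * M / k ^ 2 := by
  have hk' : (k : ℝ) ≠ 0 := Int.cast_ne_zero.2 hk
  have hsin : ∀ x, HasDerivAt (fun x => sin (k * x) / k) (cos (k * x)) x := fun x => by
    simpa [hk'] using (((hasDerivAt_id x).const_mul (k : ℝ)).sin).div_const (k : ℝ)
  have hcos : ∀ x, HasDerivAt (fun x => -cos (k * x) / k) (sin (k * x)) x := fun x => by
    simpa [hk'] using (((hasDerivAt_id x).const_mul (k : ℝ)).cos.neg).div_const (k : ℝ)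
  have hv'c : Continuous v' := continuous_iff_continuousAt.2 fun x => (hv' x).continuousAt
  have hsin_pi : sin (k * π) = 0 := sin_int_mul_pi k
  have hcos_pi : cos (k * -π) = cos (k * π) := by rw [mul_neg, cos_neg]
  have hparts₁ : ∫ x in -π..π, cos (k * x) * v x = -((∫ x in -π..π, sin (k * x) * v' x) / k) := by
    have := intervalIntegral.integral_mul_deriv_eq_deriv_mul (a := -π) (b := π)
      (fun x _ => hv x) (fun x _ => hsin x) (hv'c.intervalIntegrable _ _)
      ((by fun_prop : Continuous fun x => cos (k * x)).intervalIntegrable _ _)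
    simp only [mul_neg, sin_neg, hsin_pi, neg_zero, zero_div, mul_zero, sub_zero, zero_sub] at this
    simp_rw [← intervalIntegral.integral_div, mul_comm (cos _), this, mul_comm (v' _),
      div_mul_eq_mul_div]
  have hparts₂ : ∫ x in -π..π, sin (k * x) * v' x = (∫ x in -π..π, cos (k * x) * v'' x) / k := by
    have := intervalIntegral.integral_mul_deriv_eq_deriv_mul (a := -π) (b := π)
      (fun x _ => hv' x) (fun x _ => hcos x) hv''
      ((by fun_prop : Continuous fun x => sin (k * x)).intervalIntegrable _ _)
    rw [hcos_pi, hper, sub_self, zero_sub] at this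
    simp_rw [mul_comm (sin _), this, ← intervalIntegral.integral_neg,
      ← intervalIntegral.integral_div]
    congr 1 with x
    ring
  have hbound : |∫ x in -π..π, cos (k * x) * v'' x| ≤ M * |π - -π| := by
    refine intervalIntegral.norm_integral_le_of_norm_le_const
      (f := fun x => cos (k * x) * v'' x) fun x _ => ?_
    rw [Real.norm_eq_abs, abs_mul]
    exact mul_le_of_le_one_left (abs_nonneg _) (abs_cos_le_one _) |>.trans (hM x)
  rw [hparts₁, hparts₂, abs_neg, abs_div, abs_div, div_div, ← sq, sq_abs]
  rw [abs_of_pos (by linarith [pi_pos] : 0 < π - -π)] at hbound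
  gcongr
  linarith

theorem abs_integral_cos_int_mul_mul_cos_mul_sin_le {k : ℤ} (hk : k ≠ 0) (a : ℝ) :
    |∫ x in -π..π, cos (k * x) * cos (a * sin x)| ≤ 2 * π * a ^ 2 / k ^ 2 := by
  have hv : ∀ x, HasDerivAt (fun x => cos (a * sin x)) (-sin (a * sin x) * (a * cos x)) x :=
    fun x => ((hasDerivAt_sin x).const_mul a).cos
  have hv' : ∀ x, HasDerivAt (fun x => -sin (a * sin x) * (a * cos x))
      (-(cos (a * sin x) * (a * cos x)) * (a * cos x) + -sin (a * sin x) * (a * -sin x)) x :=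
    fun x => ((hasDerivAt_sin x).const_mul a).sin.neg.mul ((hasDerivAt_cos x).const_mul a)
  refine abs_integral_cos_int_mul_le_of_hasDerivAt hk hv hv'
    (Continuous.intervalIntegrable (by fun_prop) _ _) (by simp) fun x => ?_
  have hsin : |sin (a * sin x) * (a * sin x)| ≤ (a * sin x) ^ 2 := by
    rw [abs_mul, ← sq_abs (a * sin x), sq]
    exact mul_le_mul_of_nonneg_right abs_sin_le_abs (abs_nonneg _)
  have hcos := abs_le.1 (abs_cos_le_one (a * sin x))
  have hsin' := abs_le.1 hsin
  rw [abs_le]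
  constructor <;> nlinarith [sin_sq_add_cos_sq x, mul_self_nonneg (a * cos x)]

theorem hasDerivAt_ite_mul_sin_div (c s t : ℝ) :
    HasDerivAt (fun t => if s = 0 then 2 * t * c else c * sin (2 * t * s) / s)
      (2 * (c * cos (2 * t * s))) t := by
  by_cases hs : s = 0
  · simpa [hs, mul_comm] using (hasDerivAt_id t).const_mul 2 |>.mul_const c
  · simp only [hs, if_false]
    have hsin := (((hasDerivAt_id t).const_mul 2).mul_const s).sin.const_mul c
    refine (hsin.div_const s).congr_deriv ?_
    simp only [id, mul_one]
    field_simp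

theorem abs_ite_mul_sin_div_le {c : ℝ} (hc : |c| ≤ 1) (s t : ℝ) :
    |if s = 0 then 2 * t * c else c * sin (2 * t * s) / s| ≤ 2 * |t| := by
  split_ifs with hs
  · rw [abs_mul, abs_mul, abs_two]
    exact mul_le_of_le_one_right (by positivity) hc
  · have hsin : |sin (2 * t * s)| ≤ 2 * |t| * |s| := by
      simpa [abs_mul] using abs_sin_le_abs (x := 2 * t * s)
    rw [abs_div, abs_mul, div_le_iff₀ (abs_pos.2 hs)]
    calc |c| * |sin (2 * t * s)| ≤ 1 * (2 * |t| * |s|) := by gcongr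
      _ = 2 * |t| * |s| := one_mul _

theorem hasDerivAt_Gfun (n : ℤ) (t : ℝ) :
    HasDerivAt (Gfun n)
      (4 / π * ∫ σ in -π..π, cos (2 * σ * n) * cos (2 * t * sin σ)) t := by
  set F : ℝ → ℝ → ℝ := fun t σ => if sin σ = 0 then 2 * t * cos (2 * σ * n)
    else cos (2 * σ * n) * sin (2 * t * sin σ) / sin σ
  have hF_meas : ∀ t, AEStronglyMeasurable (F t) (volume.restrict (uIoc (-π) π)) := fun t =>
    (Measurable.ite (measurableSet_eq_fun measurable_sin measurable_const) (by fun_prop)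
      (by fun_prop)).aestronglyMeasurable
  have hF_int : IntervalIntegrable (F t) volume (-π) π :=
    (intervalIntegrable_const (c := 2 * |t|)).mono_fun' (hF_meas t) <|
      .of_forall fun σ => abs_ite_mul_sin_div_le (abs_cos_le_one _) _ _
  have hdiff := intervalIntegral.hasDerivAt_integral_of_dominated_loc_of_deriv_le
    (F' := fun t σ => 2 * (cos (2 * σ * n) * cos (2 * t * sin σ))) (bound := fun _ => 2)
    (Metric.ball_mem_nhds t one_pos) (.of_forall hF_meas) hF_int
    (by fun_prop : Continuous _).aestronglyMeasurable
    (.of_forall fun σ _ x _ => by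
      rw [norm_mul, Real.norm_two, norm_mul]
      exact mul_le_of_le_one_right zero_le_two <|
        mul_le_one₀ (abs_cos_le_one _) (norm_nonneg _) (abs_cos_le_one _))
    intervalIntegrable_const
    (.of_forall fun σ _ x _ => hasDerivAt_ite_mul_sin_div _ _ x)
  refine (hdiff.2.const_mul (2 / π)).congr_deriv ?_
  rw [intervalIntegral.integral_const_mul]
  ring

/-- There is `C > 0` with `|∂ₜG(n,t)| ≤ C t²/n²` for all `n ≠ 0`, `t ∈ ℝ`. -/
theorem green_G_deriv_decay : ∃ C : ℝ, 0 < C ∧ ∀ n : ℤ, n ≠ 0 → ∀ t : ℝ,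
    |deriv (Gfun n) t| ≤ C * t ^ 2 / (n : ℝ) ^ 2 := by
  refine ⟨8, by norm_num, fun n hn t => ?_⟩
  have hI : |∫ σ in -π..π, cos (2 * σ * n) * cos (2 * t * sin σ)| ≤ 2 * π * t ^ 2 / n ^ 2 :=
    calc _ = |∫ σ in -π..π, cos (((2 * n : ℤ) : ℝ) * σ) * cos (2 * t * sin σ)| := by
          push_cast; simp_rw [mul_right_comm 2 _ (n : ℝ)]
      _ ≤ 2 * π * (2 * t) ^ 2 / ((2 * n : ℤ) : ℝ) ^ 2 :=
          abs_integral_cos_int_mul_mul_cos_mul_sin_le (by omega) _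
      _ = 2 * π * t ^ 2 / n ^ 2 := by push_cast; field_simp
  rw [(hasDerivAt_Gfun n t).deriv, abs_mul, abs_of_pos (by positivity)]
  calc 4 / π * |_| ≤ 4 / π * (2 * π * t ^ 2 / n ^ 2) := by gcongr
    _ = 8 * t ^ 2 / n ^ 2 := by field_simp; ring
end

section
/- For all n ∈ ℤ and t ∈ ℝ, the two lattice Green functions are related by the identity G(n+1,t) + G(n−1,t) − 2G(n,t) = −4·G₁(n,t). -/
open Set Filter

/-! With the removable singularity absorbed into `sinc`, the integrand of `G(m,t)` is
`2t sinc(2t sin σ) · cos(2σm)`. The discrete Laplacian in `m` only sees the cosine, on which it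
acts as multiplication by `-4 sin² σ`, and `sin² σ · 2t sinc(2t sin σ) = sin(2t sin σ) sin σ`
is the integrand of `G₁`. -/

open Real intervalIntegral

theorem cos_add_add_cos_sub_sub_two_mul_cos (x y : ℝ) :
    cos (x + 2 * y) + cos (x - 2 * y) - 2 * cos x = -4 * sin y ^ 2 * cos x := by
  rw [cos_add, cos_sub, cos_two_mul, cos_sq']
  ring

theorem mul_sinc (x : ℝ) : x * sinc x = sin x := by
  rcases eq_or_ne x 0 with rfl | hx
  · simp
  · rw [sinc_of_ne_zero hx, mul_div_cancel₀ _ hx]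

theorem lap_const_mul (c : ℝ) (f : ℤ → ℝ) (n : ℤ) :
    lap (fun m => c * f m) n = c * lap f n := by
  unfold lap
  ring

theorem lap_intervalIntegral {μ : MeasureTheory.Measure ℝ} {a b : ℝ} (f : ℤ → ℝ → ℝ) (n : ℤ)
    (hf : ∀ m, IntervalIntegrable (f m) μ a b) :
    lap (fun m => ∫ x in a..b, f m x ∂μ) n = ∫ x in a..b, lap (fun m => f m x) n ∂μ := by
  unfold lap
  rw [integral_sub ((hf _).add (hf _)) ((hf _).const_mul 2), integral_add (hf _) (hf _),
    integral_const_mul]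

theorem lap_cos_mul (θ : ℝ) (n : ℤ) :
    lap (fun m : ℤ => cos (2 * θ * m)) n = -4 * sin θ ^ 2 * cos (2 * θ * n) := by
  unfold lap
  push_cast
  rw [← cos_add_add_cos_sub_sub_two_mul_cos]
  ring_nf

theorem Gfun_eq_integral_sinc_mul_cos (m : ℤ) (t : ℝ) :
    Gfun m t = 2 / π * ∫ σ in -π..π, 2 * t * sinc (2 * t * sin σ) * cos (2 * σ * m) := by
  unfold Gfun
  congr 2 with σ
  split_ifs with h
  · rw [h]
    simp only [mul_zero, sinc_zero]
    ring
  · have hsinc : 2 * t * sinc (2 * t * sin σ) = sin (2 * t * sin σ) / sin σ :=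
      eq_div_of_mul_eq h (by linear_combination mul_sinc (2 * t * sin σ))
    rw [hsinc]
    ring

/-- `G(n+1,t) + G(n-1,t) - 2G(n,t) = -4 G₁(n,t)` for all `n ∈ ℤ`, `t ∈ ℝ`. -/
theorem green_laplacian_identity (n : ℤ) (t : ℝ) :
    Gfun (n + 1) t + Gfun (n - 1) t - 2 * Gfun n t = -4 * G1fun n t := by
  have hint : ∀ m : ℤ, IntervalIntegrable
      (fun σ => 2 * t * sinc (2 * t * sin σ) * cos (2 * σ * m)) MeasureTheory.volume (-π) π :=
    fun m => Continuous.intervalIntegrable (by fun_prop) _ _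
  have hpointwise (σ : ℝ) :
      lap (fun m => 2 * t * sinc (2 * t * sin σ) * cos (2 * σ * m)) n
        = -4 * (cos (2 * σ * n) * sin (2 * t * sin σ) * sin σ) := by
    rw [lap_const_mul, lap_cos_mul]
    linear_combination (-4 * cos (2 * σ * n) * sin σ) * mul_sinc (2 * t * sin σ)
  change lap (fun m => Gfun m t) n = _
  simp only [Gfun_eq_integral_sinc_mul_cos]
  rw [lap_const_mul, lap_intervalIntegral _ n hint, integral_congr fun σ _ => hpointwise σ,
    integral_const_mul, G1fun]
  ring
end

section
/- Let p ≥ 2 be an integer and χ_p > 0. Let (ã_n)_{n∈ℤ} and (b̃_n)_{n∈ℤ} be real sequences such that for every n the series Σ_{m≤n−1} b̃_m converges and Σ_{n∈ℤ} (Σ_{m≤n−1} b̃_m)² + Σ_{n∈ℤ} ã_n² < ∞, and assume moreover that for every n the series Σ_{m≤n} ã_m converges with sup_{n∈ℤ} |Σ_{m≤n} ã_m| < ∞. Let α = (α_n)_{n∈ℤ} be a family of C² real functions on [0,T) with finite energy which solves the FPU equation α̈_n(t) = Δα_n(t) + χ_p·Δ(α_n(t)^p) with α_n(0) = ã_n and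 α̇_n(0) = b̃_n. Then for every n ∈ ℤ and every t ∈ [0,T) the series ũ_n(t) = Σ_{m≤n} α_m(t) converges, and for every T' < T the function (n,t) ↦ ũ_n(t) is bounded on ℤ × [0,T']. -/
open Set Filter

open Topology

/-!
Two energy bounds drive the proof: `|α_m(t)| ≤ B` and `|Σ_{m<n} α̇_m(t)| ≤ B`.

Summability over `ℤ` means absolute summability, so convergence of the partial sums is not
enough. The window sums `Z_K(t) = Σ_{k<K} (|α_{n-k}(t)| + |α̇_{n-k}(t)|)` satisfy, by the
equation and `|x^p| ≤ B^{p-1} |x|`, an integral inequality `Z_K ≤ Z_K(0) + ∫ (L Z_K + D)`: the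
two boundary terms `|α_{n+1}|`, `|α_{n-K}|` of the discrete Laplacians are absorbed into `D`
by the energy bound, so Grönwall bounds `Z_K(t)` independently of `K`.

For the bound, the sum of `α̇` over a window is a difference of two tail sums, hence at most
`2B`, and integrating in time gives `|ũ_n(t)| ≤ |ũ_n(0)| + 2Bt`.
-/

theorem le_gronwallBound_of_le_add_integral {f : ℝ → ℝ} {δ K ε b : ℝ} (hK : 0 ≤ K)
    (hf : ContinuousOn f (Icc 0 b))
    (h : ∀ t ∈ Icc 0 b, f t ≤ δ + ∫ u in (0 : ℝ)..t, (K * f u + ε)) :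
    ∀ t ∈ Icc 0 b, f t ≤ gronwallBound δ K ε t := by
  set W : ℝ → ℝ := fun t => δ + ∫ u in (0 : ℝ)..t, (K * f u + ε)
  have hg : ContinuousOn (fun u => K * f u + ε) (Icc 0 b) := by fun_prop
  have hW : ∀ x ∈ Icc 0 b, HasDerivWithinAt W (K * f x + ε) (Icc 0 b) x := by
    intro x hx
    have : Fact (x ∈ Icc 0 b) := ⟨hx⟩
    exact (intervalIntegral.integral_hasDerivWithinAt_right
      (ContinuousOn.intervalIntegrable_of_Icc hx.1 (hg.mono (Icc_subset_Icc_right hx.2)))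
      (hg.stronglyMeasurableAtFilter_nhdsWithin measurableSet_Icc x) (hg x hx)).const_add δ
  have hWle : ∀ t ∈ Icc 0 b, W t ≤ gronwallBound δ K ε (t - 0) :=
    le_gronwallBound_of_liminf_deriv_right_le (fun x hx => (hW x hx).continuousWithinAt)
      (fun x hx _ hr => ((hW x (Ico_subset_Icc_self hx)).mono_of_mem_nhdsWithin
        (mem_of_superset (Icc_mem_nhdsGE hx.2) (Icc_subset_Icc_left hx.1))).liminf_right_slope_le
          hr)
      (by simp [W])
      (fun x hx => by gcongr; exact h x (Ico_subset_Icc_self hx))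
  intro t ht
  simpa using (h t ht).trans (hWle t ht)

section Calculus

variable {f : ℝ → ℝ} {T t : ℝ}

theorem ContinuousOn.intervalIntegrable_of_mem_Ico (hf : ContinuousOn f (Ico 0 T))
    (ht : t ∈ Ico 0 T) : IntervalIntegrable f MeasureTheory.volume 0 t :=
  ContinuousOn.intervalIntegrable_of_Icc ht.1 (hf.mono (Icc_subset_Ico_right ht.2))

theorem integral_derivWithin_Ico (hf : ContDiffOn ℝ 1 f (Ico 0 T)) (ht : t ∈ Ico 0 T) :
    ∫ u in (0 : ℝ)..t, derivWithin f (Ico 0 T) u = f t - f 0 := by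
  refine intervalIntegral.integral_eq_sub_of_hasDeriv_right_of_le ht.1
    (hf.continuousOn.mono (Icc_subset_Ico_right ht.2)) (fun x hx => ?_)
    ((hf.continuousOn_derivWithin (uniqueDiffOn_Ico 0 T) le_rfl).intervalIntegrable_of_mem_Ico ht)
  have hx' : Ico 0 T ∈ 𝓝 x := Ico_mem_nhds hx.1 (hx.2.trans ht.2)
  exact ((hf.differentiableOn one_ne_zero x (mem_of_mem_nhds hx')).hasDerivWithinAt.hasDerivAt
    hx').hasDerivWithinAt

theorem abs_le_abs_zero_add_integral_abs_derivWithin (hf : ContDiffOn ℝ 1 f (Ico 0 T))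
    (ht : t ∈ Ico 0 T) :
    |f t| ≤ |f 0| + ∫ u in (0 : ℝ)..t, |derivWithin f (Ico 0 T) u| := by
  calc |f t| = |f 0 + ∫ u in (0 : ℝ)..t, derivWithin f (Ico 0 T) u| := by
        rw [integral_derivWithin_Ico hf ht, add_sub_cancel]
    _ ≤ _ := (abs_add_le _ _).trans
        (add_le_add_right (intervalIntegral.abs_integral_le_integral_abs ht.1) _)

end Calculus

def natEquivIntLE (n : ℤ) : ℕ ≃ {m : ℤ // m ≤ n} where
  toFun k := ⟨n - k, by omega⟩
  invFun m := (n - m).toNat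
  left_inv k := by simp
  right_inv m := by ext; simp; omega

section Reindex

variable {G : Type*} [TopologicalSpace G] (f : ℤ → G) (n : ℤ)

theorem summable_intLE_iff_summable_nat [AddCommMonoid G] :
    Summable (fun m : {m : ℤ // m ≤ n} => f m) ↔ Summable (fun k : ℕ => f (n - k)) :=
  (natEquivIntLE n).summable_iff.symm

theorem tsum_intLE_eq_tsum_nat [AddCommMonoid G] :
    ∑' m : {m : ℤ // m ≤ n}, f m = ∑' k : ℕ, f (n - k) :=
  ((natEquivIntLE n).tsum_eq (fun m => f m)).symm

theorem sum_range_add_tsum_intLE [AddCommGroup G] [IsTopologicalAddGroup G] [T2Space G]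
    (hf : Summable fun m : {m : ℤ // m ≤ n} => f m) (K : ℕ) :
    ∑ k ∈ Finset.range K, f (n - k) + ∑' m : {m : ℤ // m ≤ n - K}, f m
      = ∑' m : {m : ℤ // m ≤ n}, f m := by
  rw [tsum_intLE_eq_tsum_nat, tsum_intLE_eq_tsum_nat,
    ← ((summable_intLE_iff_summable_nat f n).1 hf).sum_add_tsum_nat_add K]
  push_cast
  simp only [sub_add_eq_sub_sub_swap]

end Reindex

theorem abs_tsum_le_of_abs_sum_range_le {f g : ℕ → ℝ} {c : ℝ}
    (hf : Summable f) (hg : Summable g)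
    (h : ∀ K, |∑ k ∈ Finset.range K, f k| ≤ |∑ k ∈ Finset.range K, g k| + c) :
    |∑' k, f k| ≤ |∑' k, g k| + c :=
  le_of_tendsto_of_tendsto' hf.hasSum.tendsto_sum_nat.abs
    (hg.hasSum.tendsto_sum_nat.abs.add_const c) h

theorem abs_lap_le (f : ℤ → ℝ) (m : ℤ) : |lap f m| ≤ |f (m + 1)| + |f (m - 1)| + 2 * |f m| := by
  unfold lap
  calc _ ≤ |f (m + 1) + f (m - 1)| + |2 * f m| := abs_sub _ _
    _ ≤ _ := by rw [abs_mul, abs_two]; gcongr; exact abs_add_le _ _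

theorem sum_range_abs_lap_le (f : ℤ → ℝ) (n : ℤ) (K : ℕ) :
    ∑ k ∈ Finset.range K, |lap f (n - k)|
      ≤ 4 * ∑ k ∈ Finset.range K, |f (n - k)| + |f (n + 1)| + |f (n - K)| := by
  have hup : ∑ k ∈ Finset.range K, |f (n - k + 1)|
      ≤ |f (n + 1)| + ∑ k ∈ Finset.range K, |f (n - k)| :=
    calc _ ≤ ∑ k ∈ Finset.range (K + 1), |f (n - k + 1)| :=
          Finset.sum_le_sum_of_subset_of_nonneg (by simp) fun _ _ _ => abs_nonneg _
      _ = _ := by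
          rw [Finset.sum_range_succ', add_comm]
          congr 1
          · simp
          · exact Finset.sum_congr rfl fun k _ => by congr 2; push_cast; ring
  have hdown : ∑ k ∈ Finset.range K, |f (n - k - 1)|
      ≤ ∑ k ∈ Finset.range K, |f (n - k)| + |f (n - K)| :=
    calc _ ≤ |f n| + ∑ k ∈ Finset.range K, |f (n - k - 1)| := le_add_of_nonneg_left (abs_nonneg _)
      _ = ∑ k ∈ Finset.range (K + 1), |f (n - k)| := by
          rw [Finset.sum_range_succ', add_comm]
          congr 1
          · exact Finset.sum_congr rfl fun k _ => by congr 2; push_cast; ring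
          · simp
      _ = _ := Finset.sum_range_succ _ _
  calc _ ≤ ∑ k ∈ Finset.range K, (|f (n - k + 1)| + |f (n - k - 1)| + 2 * |f (n - k)|) :=
        Finset.sum_le_sum fun k _ => abs_lap_le f (n - k)
    _ ≤ _ := by
        rw [Finset.sum_add_distrib, Finset.sum_add_distrib, ← Finset.mul_sum]
        linarith

theorem tailSummable_add_one_iff {f : ℤ → ℝ} {n : ℤ} :
    TailSummable f (n + 1) ↔ Summable fun m : {m : ℤ // m ≤ n} => f m := by
  rw [TailSummable, add_sub_cancel_right]

theorem tailSum_add_one (f : ℤ → ℝ) (n : ℤ) :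
    tailSum f (n + 1) = ∑' m : {m : ℤ // m ≤ n}, f m := by
  rw [tailSum, add_sub_cancel_right]

theorem abs_le_sqrt_of_tsum_sq_le {ι : Type*} {f : ι → ℝ} {M : ℝ}
    (hf : Summable fun i => f i ^ 2) (hM : ∑' i, f i ^ 2 ≤ M) (i : ι) : |f i| ≤ √M :=
  Real.abs_le_sqrt ((hf.le_tsum i fun j _ => sq_nonneg (f j)).trans hM)

theorem FiniteEnergyOn.exists_bound {α : ℤ → ℝ → ℝ} {s : Set ℝ} {T : ℝ}
    (hE : FiniteEnergyOn α s T) :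
    ∃ B, ∀ t ∈ Ico (0 : ℝ) T, (∀ m, |α m t| ≤ B) ∧
      ∀ n, |tailSum (fun m => derivWithin (α m) s t) n| ≤ B := by
  obtain ⟨-, M, hM⟩ := hE
  refine ⟨√M, fun t ht => ?_⟩
  obtain ⟨hdα, hα, hle⟩ := hM t ht
  have hdα0 : 0 ≤ ∑' n, tailSum (fun m => derivWithin (α m) s t) n ^ 2 :=
    tsum_nonneg fun n => sq_nonneg _
  have hα0 : 0 ≤ ∑' n, α n t ^ 2 := tsum_nonneg fun n => sq_nonneg _
  exact ⟨abs_le_sqrt_of_tsum_sq_le hα (by linarith), abs_le_sqrt_of_tsum_sq_le hdα (by linarith)⟩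

theorem abs_pow_le_pow_pred_mul_abs {x s : ℝ} {p : ℕ} (hp : 1 ≤ p) (hx : |x| ≤ s) :
    |x ^ p| ≤ s ^ (p - 1) * |x| := by
  obtain ⟨q, rfl⟩ : ∃ q, p = q + 1 := ⟨p - 1, by omega⟩
  rw [abs_pow, pow_succ, Nat.add_sub_cancel]
  exact mul_le_mul_of_nonneg_right (pow_le_pow_left₀ (abs_nonneg x) hx q) (abs_nonneg x)

theorem sum_range_abs_fpu_rhs_le {p : ℕ} (hp : 1 ≤ p) (χ : ℝ) {x : ℤ → ℝ} {B : ℝ}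
    (hx : ∀ m, |x m| ≤ B) (n : ℤ) (K : ℕ) :
    ∑ k ∈ Finset.range K, |lap x (n - k) + χ * lap (fun m => x m ^ p) (n - k)|
      ≤ (1 + |χ| * B ^ (p - 1)) * (4 * ∑ k ∈ Finset.range K, |x (n - k)| + 2 * B) := by
  set S := ∑ k ∈ Finset.range K, |x (n - k)|
  have hB : 0 ≤ B := (abs_nonneg _).trans (hx 0)
  have hc : 0 ≤ B ^ (p - 1) := pow_nonneg hB _
  have hpow : ∀ m, |x m ^ p| ≤ B ^ (p - 1) * |x m| :=
    fun m => abs_pow_le_pow_pred_mul_abs hp (hx m)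
  have hlin : ∑ k ∈ Finset.range K, |lap x (n - k)| ≤ 4 * S + 2 * B :=
    (sum_range_abs_lap_le x n K).trans (by linarith [hx (n + 1), hx (n - K)])
  have hnonlin : ∑ k ∈ Finset.range K, |lap (fun m => x m ^ p) (n - k)|
      ≤ B ^ (p - 1) * (4 * S + 2 * B) := by
    refine (sum_range_abs_lap_le _ n K).trans ?_
    have hsum := Finset.sum_le_sum fun k (_ : k ∈ Finset.range K) => hpow (n - k)
    rw [← Finset.mul_sum] at hsum
    have h1 := (hpow (n + 1)).trans (mul_le_mul_of_nonneg_left (hx (n + 1)) hc)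
    have h2 := (hpow (n - K)).trans (mul_le_mul_of_nonneg_left (hx (n - K)) hc)
    linarith
  calc _ ≤ ∑ k ∈ Finset.range K,
          (|lap x (n - k)| + |χ| * |lap (fun m => x m ^ p) (n - k)|) :=
        Finset.sum_le_sum fun k _ => by rw [← abs_mul]; exact abs_add_le _ _
    _ = ∑ k ∈ Finset.range K, |lap x (n - k)|
          + |χ| * ∑ k ∈ Finset.range K, |lap (fun m => x m ^ p) (n - k)| := by
        rw [Finset.sum_add_distrib, Finset.mul_sum]
    _ ≤ (4 * S + 2 * B) + |χ| * (B ^ (p - 1) * (4 * S + 2 * B)) := by gcongr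
    _ = _ := by ring

section Solutions

variable {T t : ℝ}

theorem sum_abs_add_abs_derivWithin_le {ι : Type*} (F : Finset ι) {g : ι → ℝ → ℝ}
    (hg : ∀ i, ContDiffOn ℝ 2 (g i) (Ico 0 T)) (ht : t ∈ Ico 0 T) :
    ∑ i ∈ F, (|g i t| + |derivWithin (g i) (Ico 0 T) t|)
      ≤ ∑ i ∈ F, (|g i 0| + |derivWithin (g i) (Ico 0 T) 0|)
        + ∫ u in (0 : ℝ)..t, ∑ i ∈ F, (|derivWithin (g i) (Ico 0 T) u|
          + |derivWithin (derivWithin (g i) (Ico 0 T)) (Ico 0 T) u|) := by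
  have hud := uniqueDiffOn_Ico (0 : ℝ) T
  have hg1 : ∀ i, ContDiffOn ℝ 1 (g i) (Ico 0 T) := fun i => (hg i).of_le (by norm_num)
  have hdg : ∀ i, ContDiffOn ℝ 1 (derivWithin (g i) (Ico 0 T)) (Ico 0 T) :=
    fun i => (hg i).derivWithin hud (by norm_num)
  have hint₁ := fun i =>
    ((hg1 i).continuousOn_derivWithin hud le_rfl).abs.intervalIntegrable_of_mem_Ico ht
  have hint₂ := fun i =>
    ((hdg i).continuousOn_derivWithin hud le_rfl).abs.intervalIntegrable_of_mem_Ico ht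
  rw [intervalIntegral.integral_finsetSum fun i _ => (hint₁ i).add (hint₂ i),
    ← Finset.sum_add_distrib]
  refine Finset.sum_le_sum fun i _ => ?_
  rw [intervalIntegral.integral_add (hint₁ i) (hint₂ i)]
  linarith [abs_le_abs_zero_add_integral_abs_derivWithin (hg1 i) ht,
    abs_le_abs_zero_add_integral_abs_derivWithin (hdg i) ht]

variable {p : ℕ} {χ B : ℝ} {α : ℤ → ℝ → ℝ}

theorem SolvesFPU.sum_range_abs_deriv_le (hp : 1 ≤ p) (hsol : SolvesFPU p χ α (Ico 0 T))
    (hB : ∀ m, |α m t| ≤ B) (ht : t ∈ Ico 0 T) (n : ℤ) (K : ℕ) :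
    ∑ k ∈ Finset.range K, (|derivWithin (α (n - k)) (Ico 0 T) t|
        + |derivWithin (derivWithin (α (n - k)) (Ico 0 T)) (Ico 0 T) t|)
      ≤ 4 * (1 + |χ| * B ^ (p - 1)) * ∑ k ∈ Finset.range K,
          (|α (n - k) t| + |derivWithin (α (n - k)) (Ico 0 T) t|)
        + 2 * (1 + |χ| * B ^ (p - 1)) * B := by
  have hc : 1 ≤ 1 + |χ| * B ^ (p - 1) :=
    le_add_of_nonneg_right (mul_nonneg (abs_nonneg χ) (pow_nonneg ((abs_nonneg _).trans (hB 0)) _))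
  have hrhs := sum_range_abs_fpu_rhs_le hp χ hB n K
  simp only [← hsol _ t ht] at hrhs
  have hd : 0 ≤ ∑ k ∈ Finset.range K, |derivWithin (α (n - k)) (Ico 0 T) t| :=
    Finset.sum_nonneg fun _ _ => abs_nonneg _
  rw [Finset.sum_add_distrib, Finset.sum_add_distrib]
  nlinarith [mul_le_mul_of_nonneg_right hc hd]

theorem SolvesFPU.sum_range_le_gronwallBound (hp : 1 ≤ p)
    (hC2 : ∀ m, ContDiffOn ℝ 2 (α m) (Ico 0 T)) (hsol : SolvesFPU p χ α (Ico 0 T))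
    (hB : ∀ u ∈ Ico 0 T, ∀ m, |α m u| ≤ B) (n : ℤ) (K : ℕ) {δ : ℝ}
    (hδ : ∑ k ∈ Finset.range K, (|α (n - k) 0| + |derivWithin (α (n - k)) (Ico 0 T) 0|) ≤ δ)
    (ht : t ∈ Ico 0 T) :
    ∑ k ∈ Finset.range K, (|α (n - k) t| + |derivWithin (α (n - k)) (Ico 0 T) t|)
      ≤ gronwallBound δ (4 * (1 + |χ| * B ^ (p - 1))) (2 * (1 + |χ| * B ^ (p - 1)) * B) t := by
  have hud := uniqueDiffOn_Ico (0 : ℝ) T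
  have hsub : Icc 0 t ⊆ Ico 0 T := Icc_subset_Ico_right ht.2
  have hB0 : 0 ≤ B := (abs_nonneg _).trans (hB t ht 0)
  have hα' : ∀ m, ContinuousOn (derivWithin (α m) (Ico 0 T)) (Ico 0 T) :=
    fun m => (hC2 m).continuousOn_derivWithin hud (by norm_num)
  have hα'' : ∀ m, ContinuousOn (derivWithin (derivWithin (α m) (Ico 0 T)) (Ico 0 T)) (Ico 0 T) :=
    fun m => ((hC2 m).derivWithin hud (m := 1) (by norm_num)).continuousOn_derivWithin hud le_rfl
  have hZ : ContinuousOn (fun u => ∑ k ∈ Finset.range K,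
      (|α (n - k) u| + |derivWithin (α (n - k)) (Ico 0 T) u|)) (Ico 0 T) :=
    continuousOn_finsetSum _ fun k _ => (hC2 _).continuousOn.abs.add (hα' _).abs
  have hZ' : ContinuousOn (fun u => ∑ k ∈ Finset.range K,
      (|derivWithin (α (n - k)) (Ico 0 T) u|
        + |derivWithin (derivWithin (α (n - k)) (Ico 0 T)) (Ico 0 T) u|)) (Ico 0 T) :=
    continuousOn_finsetSum _ fun k _ => (hα' _).abs.add (hα'' _).abs
  refine le_gronwallBound_of_le_add_integral (by positivity) (hZ.mono hsub)
    (fun u hu => ?_) t ⟨ht.1, le_rfl⟩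
  have hu : u ∈ Ico 0 T := hsub hu
  refine (sum_abs_add_abs_derivWithin_le _ (fun k => hC2 _) hu).trans (add_le_add hδ ?_)
  exact intervalIntegral.integral_mono_on hu.1 (hZ'.intervalIntegrable_of_mem_Ico hu)
    (((continuousOn_const.mul hZ).add continuousOn_const).intervalIntegrable_of_mem_Ico hu)
    fun v hv => hsol.sum_range_abs_deriv_le hp (hB v (Icc_subset_Ico_right hu.2 hv))
      (Icc_subset_Ico_right hu.2 hv) n K

theorem SolvesFPU.summable_intLE (hp : 1 ≤ p)
    (hC2 : ∀ m, ContDiffOn ℝ 2 (α m) (Ico 0 T)) (hsol : SolvesFPU p χ α (Ico 0 T))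
    (hB : ∀ u ∈ Ico 0 T, ∀ m, |α m u| ≤ B) (n : ℤ)
    (hα₀ : Summable fun m : {m : ℤ // m ≤ n} => α m 0)
    (hα₀' : Summable fun m : {m : ℤ // m ≤ n} => derivWithin (α m) (Ico 0 T) 0)
    (ht : t ∈ Ico 0 T) :
    Summable fun m : {m : ℤ // m ≤ n} => α m t := by
  have hinit : Summable fun k : ℕ =>
      |α (n - k) 0| + |derivWithin (α (n - k)) (Ico 0 T) 0| :=
    ((summable_intLE_iff_summable_nat (α · 0) n).1 hα₀).abs.add
      ((summable_intLE_iff_summable_nat (fun m => derivWithin (α m) (Ico 0 T) 0) n).1 hα₀').abs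
  refine (summable_intLE_iff_summable_nat (α · t) n).2 <| Summable.of_abs <|
    summable_of_sum_range_le (c := gronwallBound (∑' k : ℕ,
      (|α (n - k) 0| + |derivWithin (α (n - k)) (Ico 0 T) 0|)) (4 * (1 + |χ| * B ^ (p - 1)))
      (2 * (1 + |χ| * B ^ (p - 1)) * B) t) (fun _ => abs_nonneg _) fun K => ?_
  calc ∑ k ∈ Finset.range K, |α (n - k) t|
      ≤ ∑ k ∈ Finset.range K, (|α (n - k) t| + |derivWithin (α (n - k)) (Ico 0 T) t|) :=
        Finset.sum_le_sum fun _ _ => le_add_of_nonneg_right (abs_nonneg _)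
    _ ≤ _ := hsol.sum_range_le_gronwallBound hp hC2 hB n K
        (hinit.sum_le_tsum _ fun _ _ => by positivity) ht

theorem abs_sum_range_le_of_abs_tailSum_le
    (hC1 : ∀ m, ContDiffOn ℝ 1 (α m) (Ico 0 T))
    (hα' : ∀ n, ∀ u ∈ Ico 0 T, TailSummable (fun m => derivWithin (α m) (Ico 0 T) u) n)
    (hB : ∀ u ∈ Ico 0 T, ∀ n, |tailSum (fun m => derivWithin (α m) (Ico 0 T) u) n| ≤ B)
    (ht : t ∈ Ico 0 T) (n : ℤ) (K : ℕ) :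
    |∑ k ∈ Finset.range K, α (n - k) t| ≤ |∑ k ∈ Finset.range K, α (n - k) 0| + 2 * B * t := by
  have hwindow : ∀ u ∈ Ico 0 T,
      ‖∑ k ∈ Finset.range K, derivWithin (α (n - k)) (Ico 0 T) u‖ ≤ 2 * B := by
    intro u hu
    have hsplit := sum_range_add_tsum_intLE (fun m => derivWithin (α m) (Ico 0 T) u) n
      (tailSummable_add_one_iff.1 (hα' (n + 1) u hu)) K
    have h₁ := hB u hu (n + 1)
    have h₂ := hB u hu (n - K + 1)
    rw [tailSum_add_one] at h₁ h₂
    rw [Real.norm_eq_abs, eq_sub_of_add_eq hsplit]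
    exact (abs_sub _ _).trans (by linarith)
  have hdiff : ∑ k ∈ Finset.range K, α (n - k) t
      = ∑ k ∈ Finset.range K, α (n - k) 0
        + ∫ u in (0 : ℝ)..t, ∑ k ∈ Finset.range K, derivWithin (α (n - k)) (Ico 0 T) u := by
    rw [intervalIntegral.integral_finsetSum fun k _ => ((hC1 _).continuousOn_derivWithin
      (uniqueDiffOn_Ico 0 T) le_rfl).intervalIntegrable_of_mem_Ico ht, ← Finset.sum_add_distrib]
    exact Finset.sum_congr rfl fun k _ => by rw [integral_derivWithin_Ico (hC1 _) ht]; ring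
  have hint := intervalIntegral.norm_integral_le_of_norm_le_const fun u hu =>
    hwindow u ⟨(uIoc_of_le ht.1 ▸ hu).1.le, ((uIoc_of_le ht.1 ▸ hu).2).trans_lt ht.2⟩
  rw [Real.norm_eq_abs, sub_zero, abs_of_nonneg ht.1] at hint
  rw [hdiff]
  exact (abs_add_le _ _).trans (add_le_add_right hint _)

theorem abs_tsum_intLE_le_of_abs_tailSum_le
    (hC1 : ∀ m, ContDiffOn ℝ 1 (α m) (Ico 0 T))
    (hα' : ∀ n, ∀ u ∈ Ico 0 T, TailSummable (fun m => derivWithin (α m) (Ico 0 T) u) n)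
    (hB : ∀ u ∈ Ico 0 T, ∀ n, |tailSum (fun m => derivWithin (α m) (Ico 0 T) u) n| ≤ B)
    (ht : t ∈ Ico 0 T) (n : ℤ) (hαt : Summable fun m : {m : ℤ // m ≤ n} => α m t)
    (hα₀ : Summable fun m : {m : ℤ // m ≤ n} => α m 0) :
    |∑' m : {m : ℤ // m ≤ n}, α m t| ≤ |∑' m : {m : ℤ // m ≤ n}, α m 0| + 2 * B * t := by
  rw [tsum_intLE_eq_tsum_nat (α · t), tsum_intLE_eq_tsum_nat (α · 0)]
  exact abs_tsum_le_of_abs_sum_range_le ((summable_intLE_iff_summable_nat (α · t) n).1 hαt)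
    ((summable_intLE_iff_summable_nat (α · 0) n).1 hα₀)
    (abs_sum_range_le_of_abs_tailSum_le hC1 hα' hB ht n)

end Solutions

theorem fpu_displacement_bounded_general (p : ℕ) (hp : 2 ≤ p) (χ : ℝ) (T : ℝ) (a b : ℤ → ℝ)
    (hb : ∀ n : ℤ, TailSummable b n)
    (haconv : ∀ n : ℤ, Summable (fun m : {m : ℤ // m ≤ n} => a m.1))
    (habd : ∃ K : ℝ, ∀ n : ℤ, |∑' m : {m : ℤ // m ≤ n}, a m.1| ≤ K)
    (α : ℤ → ℝ → ℝ)
    (hC2 : ∀ n : ℤ, ContDiffOn ℝ 2 (α n) (Ico 0 T))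
    (hsol : SolvesFPU p χ α (Ico 0 T))
    (hic1 : ∀ n : ℤ, α n 0 = a n)
    (hic2 : ∀ n : ℤ, derivWithin (α n) (Ico 0 T) 0 = b n)
    (hE : FiniteEnergyOn α (Ico 0 T) T) :
    (∀ n : ℤ, ∀ t ∈ Ico (0 : ℝ) T, Summable (fun m : {m : ℤ // m ≤ n} => α m.1 t)) ∧
    ∀ T' : ℝ, T' < T → ∃ K : ℝ, ∀ n : ℤ, ∀ t ∈ Icc (0 : ℝ) T',
      |∑' m : {m : ℤ // m ≤ n}, α m.1 t| ≤ K := by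
  obtain ⟨B, hB⟩ := hE.exists_bound
  have hsumm : ∀ n : ℤ, ∀ t ∈ Ico (0 : ℝ) T, Summable fun m : {m : ℤ // m ≤ n} => α m.1 t :=
    fun n t ht => hsol.summable_intLE (by omega) hC2 (fun u hu => (hB u hu).1) n
      (by simpa only [hic1] using haconv n)
      (by simpa only [hic2] using tailSummable_add_one_iff.1 (hb (n + 1))) ht
  refine ⟨hsumm, fun T' hT' => ?_⟩
  obtain ⟨A, hA⟩ := habd
  refine ⟨A + 2 * B * T', fun n t ht => ?_⟩
  have htT : t ∈ Ico 0 T := ⟨ht.1, ht.2.trans_lt hT'⟩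
  have h0T : (0 : ℝ) ∈ Ico 0 T := ⟨le_rfl, htT.1.trans_lt htT.2⟩
  have hB0 : 0 ≤ B := (abs_nonneg _).trans ((hB t htT).1 0)
  calc _ ≤ |∑' m : {m : ℤ // m ≤ n}, α m 0| + 2 * B * t :=
        abs_tsum_intLE_le_of_abs_tailSum_le (fun m => (hC2 m).of_le (by norm_num)) hE.1
          (fun u hu => (hB u hu).2) htT n (hsumm n t htT) (hsumm n 0 h0T)
    _ ≤ A + 2 * B * T' := by
        simp only [hic1]
        gcongr
        · exact hA n
        · exact ht.2

/-- for a finite-energy solution of the FPU lattice with bounded summable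
initial displacements, the displacement field `ũ_n(t) = Σ_{m≤n} α_m(t)` is well defined
and bounded on `ℤ × [0,T']` for every `T' < T`. -/
theorem fpu_displacement_bounded (p : ℕ) (hp : 2 ≤ p) (χ : ℝ) (hχ : 0 < χ)
    (T : ℝ) (hT : 0 < T) (a b : ℤ → ℝ)
    (hb : ∀ n : ℤ, TailSummable b n)
    (hb2 : Summable fun n : ℤ => (tailSum b n) ^ 2)
    (ha2 : Summable fun n : ℤ => (a n) ^ 2)
    (haconv : ∀ n : ℤ, Summable (fun m : {m : ℤ // m ≤ n} => a m.1))
    (habd : ∃ K : ℝ, ∀ n : ℤ, |∑' m : {m : ℤ // m ≤ n}, a m.1| ≤ K)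
    (α : ℤ → ℝ → ℝ)
    (hC2 : ∀ n : ℤ, ContDiffOn ℝ 2 (α n) (Ico 0 T))
    (hsol : SolvesFPU p χ α (Ico 0 T))
    (hic1 : ∀ n : ℤ, α n 0 = a n)
    (hic2 : ∀ n : ℤ, derivWithin (α n) (Ico 0 T) 0 = b n)
    (hE : FiniteEnergyOn α (Ico 0 T) T) :
    (∀ n : ℤ, ∀ t ∈ Ico (0 : ℝ) T, Summable (fun m : {m : ℤ // m ≤ n} => α m.1 t)) ∧
    ∀ T' : ℝ, T' < T → ∃ K : ℝ, ∀ n : ℤ, ∀ t ∈ Icc (0 : ℝ) T',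
      |∑' m : {m : ℤ // m ≤ n}, α m.1 t| ≤ K :=
  fpu_displacement_bounded_general p hp χ T a b hb haconv habd α hC2 hsol hic1 hic2 hE
end

section
/- Let p ≥ 3 be an odd integer, χ_p > 0, T > 0, and let α = (α_n)_{n∈ℤ} be a family of C² real functions on [0,T) with finite energy solving the FPU equation α̈_n(t) = Δα_n(t) + χ_p·Δ(α_n(t)^p) for all n ∈ ℤ and t ∈ [0,T). Define E(t) = Σ_{n∈ℤ} [ (1/2)(Σ_{m≤n−1} α̇_m(t))² + (1/2)α_n(t)² + (χ_p/(p+1))·α_n(t)^{p+1} ]. Assume that the series defining E(t) converges for each t ∈ [0,T), and that this series as well as the series of its term-wise time derivatives converge locally uniformly on [0,T). Then E(t) = E(0) for all t ∈ [0,T). -/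
/-!
Put `F(x) = x + χ x^p` and `S_n = Σ_{m ≤ n-1} α̇_m`. The equation reads
`α̈_m = F(α_{m+1}) - 2 F(α_m) + F(α_{m-1})`; integrating in time and summing over `m ≤ n-1`
telescopes, the boundary term at `-∞` vanishing by dominated convergence (the `α_m` are bounded
uniformly by the energy and tend to `0`), so `Ṡ_n = F(α_n) - F(α_{n-1})`.
With `α̇_n = S_{n+1} - S_n` this gives `ė_n = J_n - J_{n-1}` for the flux `J_n = S_{n+1} F(α_n)`,
which tends to `0` as `|n| → ∞`; hence `Σ_n ė_n = 0`. As `Σ_n ė_n` converges uniformly on `[0,t]`,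
the mean value inequality for the partial sums shows `E(t) = E(0)`.
-/

open Set Filter

open MeasureTheory Topology Interval

theorem hasSum_tail_iff {M : Type*} [AddCommMonoid M] [TopologicalSpace M]
    (f : ℤ → M) (n : ℤ) (a : M) :
    HasSum (fun m : {m : ℤ // m ≤ n - 1} => f m) a ↔ HasSum (fun k : ℕ => f (n - 1 - k)) a := by
  have hrange : range (fun k : ℕ => n - 1 - (k : ℤ)) = {m | m ≤ n - 1} := by
    ext m
    constructor
    · rintro ⟨k, rfl⟩
      exact show n - 1 - (k : ℤ) ≤ n - 1 by omega
    · intro hm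
      change m ≤ n - 1 at hm
      exact ⟨(n - 1 - m).toNat, show n - 1 - ((n - 1 - m).toNat : ℤ) = m by omega⟩
  refine (hasSum_subtype_iff_indicator (s := {m | m ≤ n - 1})).trans ?_
  rw [← Function.Injective.hasSum_iff (g := fun k : ℕ => n - 1 - (k : ℤ))
    (fun _ _ h => by simp only at h; omega) (fun m hm => indicator_of_notMem (hrange ▸ hm) f)]
  congr! with k
  exact indicator_of_mem (s := {m | m ≤ n - 1}) (show n - 1 - (k : ℤ) ≤ n - 1 by omega) f

theorem tailSum_add_one_s10 {f : ℤ → ℝ} {n : ℤ} (h : TailSummable f n) :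
    tailSum f (n + 1) = tailSum f n + f n := by
  have hn : HasSum (fun k : ℕ => f (n - 1 - k)) (tailSum f n) := (hasSum_tail_iff f n _).1 h.hasSum
  have hn1 : HasSum (fun k : ℕ => f (n - k)) (f n + tailSum f n) := by
    simpa using (hn.congr_fun fun k => by push_cast; ring_nf).zero_add (f := fun k : ℕ => f (n - k))
  rw [add_comm (tailSum f n)]
  exact ((hasSum_tail_iff f (n + 1) _).2 (by simpa using hn1)).tsum_eq

theorem tailSum_eq_of_eq_sub {u c : ℤ → ℝ} {n : ℤ} (h : TailSummable u n)
    (hu : ∀ m, u m = c m - c (m - 1)) (hc : Tendsto c atBot (𝓝 0)) : tailSum u n = c (n - 1) := by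
  have hpartial : ∀ N : ℕ, ∑ k ∈ Finset.range N, u (n - 1 - k) = c (n - 1) - c (n - 1 - N) := by
    intro N
    have := Finset.sum_range_sub' (fun k : ℕ => c (n - 1 - k)) N
    simp only [Nat.cast_zero, sub_zero, Nat.cast_succ] at this
    rw [← this]
    exact Finset.sum_congr rfl fun k _ => by rw [hu, sub_sub _ (k : ℤ) 1]
  have hlim : Tendsto (fun N : ℕ => c (n - 1) - c (n - 1 - N)) atTop (𝓝 (c (n - 1) - 0)) :=
    tendsto_const_nhds.sub (hc.comp (tendsto_atBot_add_const_left _ _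
      (tendsto_neg_atTop_atBot.comp tendsto_natCast_atTop_atTop)))
  rw [sub_zero] at hlim
  exact tendsto_nhds_unique ((hasSum_tail_iff u n _).1 h.hasSum).tendsto_sum_nat
    (by simpa only [hpartial] using hlim)

theorem HasSum.eq_zero_of_sub_of_tendsto_cofinite {P : ℤ → ℝ} {L : ℝ}
    (h : HasSum (fun n => P n - P (n - 1)) L) (hP : Tendsto P cofinite (𝓝 0)) : L = 0 := by
  rw [Int.cofinite_eq, tendsto_sup] at hP
  -- pairing the terms `k` and `-(k + 1)`, the partial sums telescope
  have hpartial : ∀ N : ℕ,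
      ∑ k ∈ Finset.range N, (P k - P (k - 1) + (P (-(k + 1)) - P (-(k + 1) - 1)))
        = P (N - 1) - P (-N - 1) := by
    intro N
    have := Finset.sum_range_sub (fun k : ℕ => P (k - 1) - P (-k - 1)) N
    simp only [Nat.cast_zero, Nat.cast_succ, zero_sub, neg_zero, sub_self] at this
    rw [sub_zero] at this
    rw [← this]
    refine Finset.sum_congr rfl fun k _ => ?_
    ring_nf
  have hlim : Tendsto (fun N : ℕ => P (N - 1) - P (-N - 1)) atTop (𝓝 (0 - 0)) :=
    (hP.2.comp (tendsto_atTop_atTop.2 fun b => ⟨(b + 1).toNat, fun N hN => by omega⟩)).sub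
      (hP.1.comp (tendsto_atTop_atBot.2 fun b => ⟨(-b).toNat, fun N hN => by omega⟩))
  rw [sub_zero] at hlim
  exact tendsto_nhds_unique h.nat_add_neg_add_one.tendsto_sum_nat
    (by simpa only [hpartial] using hlim)

theorem hasDerivWithinAt_integral_Ico {E : Type*} [NormedAddCommGroup E] [NormedSpace ℝ E]
    [CompleteSpace E] {f : ℝ → E} {a b x : ℝ} (hf : ContinuousOn f (Ico a b)) (hx : x ∈ Ico a b) :
    HasDerivWithinAt (fun u => ∫ s in a..u, f s) (f x) (Ico a b) x := by
  have hint : IntervalIntegrable f volume a x :=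
    (hf.mono (by rw [uIcc_of_le hx.1]; exact Icc_subset_Ico_right hx.2)).intervalIntegrable
  rcases hx.1.eq_or_lt with rfl | hax
  · have hle : 𝓝[>] a ≤ 𝓝[Ico a b] a := by
      rw [nhdsWithin_Ico_eq_nhdsGE hx.2]
      exact nhdsWithin_mono _ Ioi_subset_Ici_self
    exact (intervalIntegral.integral_hasDerivWithinAt_right hint (s := Ici a) (t := Ioi a)
      ⟨Ico a b, hle self_mem_nhdsWithin, hf.aestronglyMeasurable measurableSet_Ico⟩
      ((hf a hx).mono_left hle)).mono Ico_subset_Ici_self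
  · have hnhds : Ico a b ∈ 𝓝 x := Ico_mem_nhds hax hx.2
    exact (intervalIntegral.integral_hasDerivAt_right hint
      ⟨_, hnhds, hf.aestronglyMeasurable measurableSet_Ico⟩
      (hf.continuousAt hnhds)).hasDerivWithinAt

theorem integral_derivWithin_Ico_s10 {E : Type*} [NormedAddCommGroup E] [NormedSpace ℝ E]
    [CompleteSpace E] {f : ℝ → E} {a b x : ℝ} (hf : ContDiffOn ℝ 1 f (Ico a b)) (hx : x ∈ Ico a b) :
    ∫ s in a..x, derivWithin f (Ico a b) s = f x - f a := by
  have hsub : Icc a x ⊆ Ico a b := Icc_subset_Ico_right hx.2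
  refine intervalIntegral.integral_eq_sub_of_hasDeriv_right_of_le hx.1 (hf.continuousOn.mono hsub)
    (fun y hy => ?_) ?_
  · have hnhds : Ico a b ∈ 𝓝 y := Ico_mem_nhds hy.1 (hy.2.trans hx.2)
    exact ((hf.differentiableOn one_ne_zero y (hsub (Ioo_subset_Icc_self hy))).hasDerivWithinAt
      |>.hasDerivAt hnhds).hasDerivWithinAt
  · refine ContinuousOn.intervalIntegrable ?_
    rw [uIcc_of_le hx.1]
    exact (hf.continuousOn_derivWithin (uniqueDiffOn_Ico a b) le_rfl).mono hsub

theorem tendsto_cofinite_zero_of_summable_sq {ι : Type*} {f : ι → ℝ}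
    (h : Summable fun i => f i ^ 2) : Tendsto f cofinite (𝓝 0) := by
  rw [tendsto_zero_iff_abs_tendsto_zero]
  simpa [Function.comp_def, Real.sqrt_sq_eq_abs] using h.tendsto_cofinite_zero.sqrt

theorem tsum_eq_tsum_of_tendstoUniformlyOn_sum_deriv_zero {ι : Type*} {e e' : ι → ℝ → ℝ}
    {a b : ℝ} (hab : a ≤ b) (hd : ∀ i, ∀ x ∈ Icc a b, HasDerivWithinAt (e i) (e' i x) (Icc a b) x)
    (ha : Summable (e · a)) (hb : Summable (e · b))
    (hu : TendstoUniformlyOn (fun s x => ∑ i ∈ s, e' i x) 0 atTop (Icc a b)) :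
    ∑' i, e i b = ∑' i, e i a := by
  have hlim : Tendsto (fun s : Finset ι => ∑ i ∈ s, (e i b - e i a)) atTop (𝓝 0) := by
    rw [Metric.tendsto_nhds]
    intro ε hε
    set δ := ε / (b - a + 1)
    filter_upwards [Metric.tendstoUniformlyOn_iff.1 hu δ (by positivity)] with s hs
    have hmvi := norm_image_sub_le_of_norm_deriv_le_segment' (C := δ)
      (fun x hx => HasDerivWithinAt.fun_sum fun i _ => hd i x hx)
      (fun x hx => by simpa using (hs x (Ico_subset_Icc_self hx)).le) b ⟨hab, le_rfl⟩
    rw [Real.dist_eq, sub_zero, Finset.sum_sub_distrib, ← Real.norm_eq_abs]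
    calc _ ≤ δ * (b - a) := hmvi
      _ < ε := by
        rw [div_mul_eq_mul_div, div_lt_iff₀ (by linarith)]
        nlinarith
  exact sub_eq_zero.1 (tendsto_nhds_unique (hb.hasSum.sub ha.hasSum) hlim)

/-- The derivative of the interaction potential `x²/2 + χ x^(p+1)/(p+1)`. -/
def fpuForce (p : ℕ) (χ x : ℝ) : ℝ := x + χ * x ^ p

theorem continuous_fpuForce (p : ℕ) (χ : ℝ) : Continuous (fpuForce p χ) := by
  unfold fpuForce
  fun_prop

theorem fpuForce_zero {p : ℕ} (hp : p ≠ 0) (χ : ℝ) : fpuForce p χ 0 = 0 := by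
  simp [fpuForce, hp]

theorem abs_fpuForce_le {p : ℕ} {χ x C : ℝ} (hx : |x| ≤ C) :
    |fpuForce p χ x| ≤ C + |χ| * C ^ p := by
  calc |fpuForce p χ x| ≤ |x| + |χ| * |x| ^ p := by
        rw [fpuForce, ← abs_pow, ← abs_mul]
        exact abs_add_le _ _
    _ ≤ C + |χ| * C ^ p := by gcongr

theorem SolvesFPU.eq_fpuForce {p : ℕ} {χ : ℝ} {α : ℤ → ℝ → ℝ} {s : Set ℝ} (hsol : SolvesFPU p χ α s)
    {n : ℤ} {t : ℝ} (ht : t ∈ s) :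
    derivWithin (derivWithin (α n) s) s t = fpuForce p χ (α (n + 1) t)
      - 2 * fpuForce p χ (α n t) + fpuForce p χ (α (n - 1) t) := by
  rw [hsol n t ht, lap, lap, fpuForce, fpuForce, fpuForce]
  ring

noncomputable def fpuEnergyDensity (p : ℕ) (χ T : ℝ) (α : ℤ → ℝ → ℝ) (n : ℤ) (t : ℝ) : ℝ :=
  (1 / 2) * (tailSum (fun m => derivWithin (α m) (Ico 0 T) t) n) ^ 2
    + (1 / 2) * (α n t) ^ 2 + (χ / ((p : ℝ) + 1)) * (α n t) ^ (p + 1)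

noncomputable def fpuEnergyFlux (p : ℕ) (χ T : ℝ) (α : ℤ → ℝ → ℝ) (n : ℤ) (t : ℝ) : ℝ :=
  tailSum (fun m => derivWithin (α m) (Ico 0 T) t) (n + 1) * fpuForce p χ (α n t)

namespace FiniteEnergyOn

variable {α : ℤ → ℝ → ℝ} {s : Set ℝ} {T t : ℝ}

theorem exists_abs_le (hE : FiniteEnergyOn α s T) : ∃ C, ∀ t ∈ Ico 0 T, ∀ n, |α n t| ≤ C := by
  obtain ⟨M, hM⟩ := hE.2
  refine ⟨√M, fun t ht n => Real.abs_le_sqrt ?_⟩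
  obtain ⟨-, hα, hle⟩ := hM t ht
  have hS : 0 ≤ ∑' k : ℤ, tailSum (fun m => derivWithin (α m) s t) k ^ 2 :=
    tsum_nonneg fun _ => sq_nonneg _
  linarith [hα.le_tsum n fun _ _ => sq_nonneg _]

theorem tendsto_cofinite_zero (hE : FiniteEnergyOn α s T) (ht : t ∈ Ico 0 T) :
    Tendsto (α · t) cofinite (𝓝 0) :=
  tendsto_cofinite_zero_of_summable_sq (hE.2.choose_spec t ht).2.1

theorem tendsto_tailSum_cofinite_zero (hE : FiniteEnergyOn α s T) (ht : t ∈ Ico 0 T) :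
    Tendsto (tailSum (fun m => derivWithin (α m) s t)) cofinite (𝓝 0) :=
  tendsto_cofinite_zero_of_summable_sq (hE.2.choose_spec t ht).1

end FiniteEnergyOn

section FPU

variable {p : ℕ} {χ T : ℝ} {α : ℤ → ℝ → ℝ}

theorem tendsto_integral_fpuForce_atBot (hp : p ≠ 0) (hα : ∀ n, ContinuousOn (α n) (Ico 0 T))
    (hE : FiniteEnergyOn α (Ico 0 T) T) {t : ℝ} (ht : t ∈ Ico 0 T) :
    Tendsto (fun k => ∫ u in 0..t, fpuForce p χ (α k u)) atBot (𝓝 0) := by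
  obtain ⟨C, hC⟩ := hE.exists_abs_le
  have hsub : Ι 0 t ⊆ Ico 0 T := by
    rw [uIoc_of_le ht.1]
    exact fun u hu => ⟨hu.1.le, hu.2.trans_lt ht.2⟩
  simpa using intervalIntegral.tendsto_integral_filter_of_dominated_convergence (f := 0)
    (fun _ => C + |χ| * C ^ p)
    (.of_forall fun k => (((continuous_fpuForce p χ).comp_continuousOn (hα k)).mono hsub)
      |>.aestronglyMeasurable measurableSet_uIoc)
    (.of_forall fun k => ae_of_all _ fun u hu => abs_fpuForce_le (hC u (hsub hu) k))
    intervalIntegrable_const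
    (ae_of_all _ fun u hu => by
      simpa [Function.comp_def, fpuForce_zero hp] using ((continuous_fpuForce p χ).tendsto 0).comp
        ((hE.tendsto_cofinite_zero (hsub hu)).mono_left atBot_le_cofinite))

theorem tailSum_sub_tailSum_eq_integral (hp : p ≠ 0) (hC2 : ∀ n, ContDiffOn ℝ 2 (α n) (Ico 0 T))
    (hE : FiniteEnergyOn α (Ico 0 T) T) (hsol : SolvesFPU p χ α (Ico 0 T)) {t : ℝ}
    (ht : t ∈ Ico 0 T) (n : ℤ) :
    tailSum (fun m => derivWithin (α m) (Ico 0 T) t) n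
        - tailSum (fun m => derivWithin (α m) (Ico 0 T) 0) n
      = (∫ u in 0..t, fpuForce p χ (α n u)) - ∫ u in 0..t, fpuForce p χ (α (n - 1) u) := by
  set G : ℤ → ℝ := fun k => ∫ u in 0..t, fpuForce p χ (α k u)
  have h0 : (0 : ℝ) ∈ Ico 0 T := ⟨le_rfl, ht.1.trans_lt ht.2⟩
  have hsub : uIcc 0 t ⊆ Ico 0 T := by
    rw [uIcc_of_le ht.1]
    exact Icc_subset_Ico_right ht.2
  have hint : ∀ k, IntervalIntegrable (fun u => fpuForce p χ (α k u)) volume 0 t := fun k =>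
    ((continuous_fpuForce p χ).comp_continuousOn (hC2 k).continuousOn |>.mono hsub)
      |>.intervalIntegrable
  have hvel : ∀ m, derivWithin (α m) (Ico 0 T) t - derivWithin (α m) (Ico 0 T) 0
      = G (m + 1) - 2 * G m + G (m - 1) := by
    intro m
    rw [← integral_derivWithin_Ico_s10 ((hC2 m).derivWithin (uniqueDiffOn_Ico 0 T) le_rfl) ht,
      intervalIntegral.integral_congr fun u hu => hsol.eq_fpuForce (hsub hu),
      intervalIntegral.integral_add ((hint _).sub ((hint m).const_mul 2)) (hint _),
      intervalIntegral.integral_sub (hint _) ((hint m).const_mul 2),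
      intervalIntegral.integral_const_mul]
  have hG : Tendsto G atBot (𝓝 0) :=
    tendsto_integral_fpuForce_atBot hp (fun k => (hC2 k).continuousOn) hE ht
  have htail := tailSum_eq_of_eq_sub (c := fun m => G (m + 1) - G m)
    (u := fun m => derivWithin (α m) (Ico 0 T) t - derivWithin (α m) (Ico 0 T) 0)
    ((hE.1 n t ht).sub (hE.1 n 0 h0)) (fun m => by rw [hvel, sub_add_cancel]; ring)
    (by simpa using (hG.comp (tendsto_atBot_add_const_right _ 1 tendsto_id)).sub hG)
  rw [sub_add_cancel] at htail
  rw [tailSum, tailSum, ← (hE.1 n t ht).tsum_sub (hE.1 n 0 h0)]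
  exact htail

theorem hasDerivWithinAt_tailSum (hp : p ≠ 0) (hC2 : ∀ n, ContDiffOn ℝ 2 (α n) (Ico 0 T))
    (hE : FiniteEnergyOn α (Ico 0 T) T) (hsol : SolvesFPU p χ α (Ico 0 T)) {t : ℝ}
    (ht : t ∈ Ico 0 T) (n : ℤ) :
    HasDerivWithinAt (fun u => tailSum (fun m => derivWithin (α m) (Ico 0 T) u) n)
      (fpuForce p χ (α n t) - fpuForce p χ (α (n - 1) t)) (Ico 0 T) t := by
  have hF : ∀ k, ContinuousOn (fun u => fpuForce p χ (α k u)) (Ico 0 T) := fun k =>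
    (continuous_fpuForce p χ).comp_continuousOn (hC2 k).continuousOn
  have hrepr := fun u (hu : u ∈ Ico 0 T) => tailSum_sub_tailSum_eq_integral hp hC2 hE hsol hu n
  exact (((hasDerivWithinAt_integral_Ico (hF n) ht).fun_sub
    (hasDerivWithinAt_integral_Ico (hF (n - 1)) ht)).const_add
      (tailSum (fun m => derivWithin (α m) (Ico 0 T) 0) n)).congr
      (fun u hu => by linarith [hrepr u hu]) (by linarith [hrepr t ht])

theorem hasDerivWithinAt_fpuEnergyDensity (hp : p ≠ 0) (hC2 : ∀ n, ContDiffOn ℝ 2 (α n) (Ico 0 T))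
    (hE : FiniteEnergyOn α (Ico 0 T) T) (hsol : SolvesFPU p χ α (Ico 0 T)) {t : ℝ}
    (ht : t ∈ Ico 0 T) (n : ℤ) :
    HasDerivWithinAt (fpuEnergyDensity p χ T α n)
      (fpuEnergyFlux p χ T α n t - fpuEnergyFlux p χ T α (n - 1) t) (Ico 0 T) t := by
  have hS := hasDerivWithinAt_tailSum hp hC2 hE hsol ht n
  have hα := ((hC2 n).differentiableOn two_ne_zero t ht).hasDerivWithinAt
  refine ((((hS.fun_pow 2).const_mul (1 / 2)).fun_add ((hα.fun_pow 2).const_mul (1 / 2))).fun_add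
    ((hα.fun_pow (p + 1)).const_mul (χ / ((p : ℝ) + 1)))).congr_deriv ?_
  rw [fpuEnergyFlux, fpuEnergyFlux, sub_add_cancel, tailSum_add_one_s10 (hE.1 n t ht), fpuForce]
  push_cast
  field_simp
  ring

theorem tendsto_fpuEnergyFlux_cofinite (hp : p ≠ 0) (hE : FiniteEnergyOn α (Ico 0 T) T) {t : ℝ}
    (ht : t ∈ Ico 0 T) : Tendsto (fpuEnergyFlux p χ T α · t) cofinite (𝓝 0) := by
  have hS := (hE.tendsto_tailSum_cofinite_zero ht).comp
    (add_left_injective (1 : ℤ)).tendsto_cofinite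
  have hF := ((continuous_fpuForce p χ).tendsto 0).comp (hE.tendsto_cofinite_zero ht)
  rw [fpuForce_zero hp] at hF
  have hprod := hS.mul hF
  rwa [mul_zero] at hprod

end FPU

theorem fpu_energy_conservation_general (p : ℕ) (hp : 3 ≤ p)
    (χ T : ℝ) (hT : 0 < T)
    (α : ℤ → ℝ → ℝ)
    (hC2 : ∀ n : ℤ, ContDiffOn ℝ 2 (α n) (Ico 0 T))
    (hE : FiniteEnergyOn α (Ico 0 T) T)
    (hsol : SolvesFPU p χ α (Ico 0 T))
    (e : ℤ → ℝ → ℝ)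
    (he : ∀ (n : ℤ) (t : ℝ),
      e n t = (1 / 2) * (tailSum (fun m => derivWithin (α m) (Ico 0 T) t) n) ^ 2
        + (1 / 2) * (α n t) ^ 2 + (χ / ((p : ℝ) + 1)) * (α n t) ^ (p + 1))
    (hconv : ∀ t ∈ Ico (0 : ℝ) T, Summable (fun n : ℤ => e n t))
    (hu2 : TendstoLocallyUniformlyOn
      (fun (s : Finset ℤ) (t : ℝ) => ∑ n ∈ s, derivWithin (e n) (Ico 0 T) t)
      (fun t => ∑' n : ℤ, derivWithin (e n) (Ico 0 T) t) atTop (Ico 0 T)) :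
    ∀ t ∈ Ico (0 : ℝ) T, (∑' n : ℤ, e n t) = ∑' n : ℤ, e n 0 := by
  obtain rfl : e = fpuEnergyDensity p χ T α := funext₂ he
  have hp0 : p ≠ 0 := by omega
  have hderiv := fun n t (ht : t ∈ Ico 0 T) =>
    hasDerivWithinAt_fpuEnergyDensity (n := n) hp0 hC2 hE hsol ht
  have hsum_deriv : ∀ t ∈ Ico 0 T,
      ∑' n, derivWithin (fpuEnergyDensity p χ T α n) (Ico 0 T) t = 0 := by
    intro t ht
    have hsum : HasSum (fun n => derivWithin (fpuEnergyDensity p χ T α n) (Ico 0 T) t)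
        (∑' n, derivWithin (fpuEnergyDensity p χ T α n) (Ico 0 T) t) := hu2.tendsto_at ht
    have hflux := fun n => (hderiv n t ht).derivWithin (uniqueDiffOn_Ico 0 T t ht)
    simp only [hflux] at hsum ⊢
    exact hsum.eq_zero_of_sub_of_tendsto_cofinite (tendsto_fpuEnergyFlux_cofinite hp0 hE ht)
  intro t ht
  have hsub : Icc 0 t ⊆ Ico 0 T := Icc_subset_Ico_right ht.2
  refine tsum_eq_tsum_of_tendstoUniformlyOn_sum_deriv_zero ht.1
    (fun n x hx => ((hderiv n x (hsub hx)).differentiableWithinAt.hasDerivWithinAt).mono hsub)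
    (hconv 0 ⟨le_rfl, hT⟩) (hconv t ht) ?_
  exact ((tendstoLocallyUniformlyOn_iff_tendstoUniformlyOn_of_compact isCompact_Icc).1
    (hu2.mono hsub)).congr_right fun x hx => hsum_deriv x (hsub hx)

/-- conservation of the energy
`E(t) = Σ_n [ ½(Σ_{m≤n-1} α̇_m)² + ½α_n² + (χ_p/(p+1)) α_n^{p+1} ]`
for a finite-energy solution of the FPU lattice, assuming the series defining `E` as well
as the series of its term-wise time derivatives converge locally uniformly on `[0,T)`. -/
theorem fpu_energy_conservation (p : ℕ) (hodd : Odd p) (hp : 3 ≤ p)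
    (χ T : ℝ) (hχ : 0 < χ) (hT : 0 < T)
    (α : ℤ → ℝ → ℝ)
    (hC2 : ∀ n : ℤ, ContDiffOn ℝ 2 (α n) (Ico 0 T))
    (hE : FiniteEnergyOn α (Ico 0 T) T)
    (hsol : SolvesFPU p χ α (Ico 0 T))
    (e : ℤ → ℝ → ℝ)
    (he : ∀ (n : ℤ) (t : ℝ),
      e n t = (1 / 2) * (tailSum (fun m => derivWithin (α m) (Ico 0 T) t) n) ^ 2
        + (1 / 2) * (α n t) ^ 2 + (χ / ((p : ℝ) + 1)) * (α n t) ^ (p + 1))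
    (hconv : ∀ t ∈ Ico (0 : ℝ) T, Summable (fun n : ℤ => e n t))
    (hdiff : ∀ n : ℤ, DifferentiableOn ℝ (e n) (Ico 0 T))
    (hu1 : TendstoLocallyUniformlyOn (fun (s : Finset ℤ) (t : ℝ) => ∑ n ∈ s, e n t)
      (fun t => ∑' n : ℤ, e n t) atTop (Ico 0 T))
    (hu2 : TendstoLocallyUniformlyOn
      (fun (s : Finset ℤ) (t : ℝ) => ∑ n ∈ s, derivWithin (e n) (Ico 0 T) t)
      (fun t => ∑' n : ℤ, derivWithin (e n) (Ico 0 T) t) atTop (Ico 0 T)) :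
    ∀ t ∈ Ico (0 : ℝ) T, (∑' n : ℤ, e n t) = ∑' n : ℤ, e n 0 :=
  fpu_energy_conservation_general p hp χ T hT α hC2 hE hsol e he hconv hu2
end
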